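/- arXiv:2603.26912 — 4 statements merged into one kernel-verified Lean document; each statement's English description precedes it below -/
import Mathlib

section
/- Let f : ℝ → ℂ be 2π-periodic with absolutely summable Fourier coefficients satisfying ∑_{m≠0} |f̂_m| |m| < ∞, and let α be of constant type. Then there exists a constant K such that for all θ ∈ ℝ and all n ≥ 1, |(1/n) ∑_{k=0}^{n−1} f(θ + 2πkα) − f̂_0| ≤ K/n. -/
open Real Complex Finset

/-!
Expanding `f` in its Fourier series, the Birkhoff sum `∑_{k<n} f (θ + 2πkα)` is
`∑_m c_m e^{imθ} ∑_{k<n} e^{2πikmα}`. The `m = 0` term is `n c_0`. For `m ≠ 0` the geometric sum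
is at most `2 / |e^{2πimα} - 1| = 1 / |sin (π m α)| ≤ 1 / (2 ‖mα‖)`, where `‖·‖` is the distance to
the nearest integer, and the constant type condition gives `‖mα‖ ≥ δ / |m|`. Hence the error is
at most `(1 / n) ∑_m |c_m| |m| / (2δ)`.
-/

def IsConstantType (α δ : ℝ) : Prop :=
  ∀ p : ℤ, ∀ q : ℕ, 1 ≤ q → |α - (p : ℝ) / (q : ℝ)| ≥ δ / (q : ℝ) ^ 2

theorem IsConstantType.div_le_abs_mul_sub {α δ : ℝ} (h : IsConstantType α δ) {q : ℤ}
    (hq : q ≠ 0) (p : ℤ) : δ / |(q : ℝ)| ≤ |q * α - p| := by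
  have hq' : (q : ℝ) ≠ 0 := by exact_mod_cast hq
  have hnat : ((q.natAbs : ℕ) : ℝ) = |(q : ℝ)| := by
    rw [Nat.cast_natAbs, Int.cast_abs]
  have hfrac : ((q.sign * p : ℤ) : ℝ) / |(q : ℝ)| = p / q := by
    rw [div_eq_div_iff (by positivity) hq', ← Int.cast_abs, ← Int.cast_mul, ← Int.cast_mul,
      mul_right_comm, Int.sign_mul_self_eq_abs, mul_comm]
  have key := h (q.sign * p) q.natAbs (by omega)
  rw [hnat, hfrac, ge_iff_le] at key
  calc δ / |(q : ℝ)| = |(q : ℝ)| * (δ / |(q : ℝ)| ^ 2) := by field_simp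
    _ ≤ |(q : ℝ)| * |α - p / q| := by gcongr
    _ = |q * α - p| := by rw [← abs_mul]; congr 1; field_simp

theorem two_mul_abs_sub_round_le_abs_sin (x : ℝ) : 2 * |x - round x| ≤ |Real.sin (π * x)| := by
  have hperiodic : |Real.sin (π * x)| = |Real.sin (π * (x - round x))| := by
    rw [show π * x = π * (x - round x) + (round x : ℤ) * π by ring, sin_add_int_mul_pi, abs_mul,
      abs_neg_one_zpow, one_mul]
  have hsmall : |π * (x - round x)| ≤ π / 2 := by
    rw [abs_mul, abs_of_pos pi_pos]
    nlinarith [abs_sub_round x, pi_pos]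
  calc 2 * |x - round x| = 2 / π * |π * (x - round x)| := by
        rw [abs_mul, abs_of_pos pi_pos]; field_simp
    _ ≤ |Real.sin (π * x)| := hperiodic ▸ mul_abs_le_abs_sin hsmall

theorem norm_geom_sum_exp_two_pi_le {x : ℝ} (hx : x ≠ round x) (n : ℕ) :
    ‖∑ k ∈ range n, exp (2 * π * x * I) ^ k‖ ≤ 1 / (2 * |x - round x|) := by
  set r := exp (2 * π * x * I)
  have hd : 0 < |x - round x| := abs_pos.mpr (sub_ne_zero.mpr hx)
  have hr : 4 * |x - round x| ≤ ‖r - 1‖ := by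
    have hnorm : ‖r - 1‖ = 2 * |Real.sin (π * x)| := by
      rw [show r = exp (I * (2 * π * x : ℝ)) by simp only [r]; push_cast; ring_nf,
        norm_exp_I_mul_ofReal_sub_one, norm_mul, Real.norm_ofNat, Real.norm_eq_abs, mul_assoc,
        mul_div_cancel_left₀ _ two_ne_zero]
    linarith [two_mul_abs_sub_round_le_abs_sin x]
  have hr1 : r ≠ 1 := fun h => by simp [h] at hr; linarith
  have hrn : ‖r ^ n - 1‖ ≤ 2 := by
    calc ‖r ^ n - 1‖ ≤ ‖r‖ ^ n + ‖(1 : ℂ)‖ := norm_pow r n ▸ norm_sub_le _ _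
      _ = 2 := by norm_num [r, norm_exp]
  rw [geom_sum_eq hr1, norm_div]
  calc ‖r ^ n - 1‖ / ‖r - 1‖ ≤ 2 / (4 * |x - round x|) := by gcongr
    _ = 1 / (2 * |x - round x|) := by field_simp; ring

theorem IsConstantType.norm_geom_sum_exp_le {α δ : ℝ} (h : IsConstantType α δ) (hδ : 0 < δ)
    {m : ℤ} (hm : m ≠ 0) (n : ℕ) :
    ‖∑ k ∈ range n, exp (2 * π * (m * α : ℝ) * I) ^ k‖ ≤ |(m : ℝ)| / (2 * δ) := by
  have hm' : (0 : ℝ) < |(m : ℝ)| := by positivity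
  have hd := h.div_le_abs_mul_sub hm (round (m * α))
  have hd0 : 0 < |m * α - round (m * α)| := lt_of_lt_of_le (by positivity) hd
  refine (norm_geom_sum_exp_two_pi_le (sub_ne_zero.mp (abs_pos.mp hd0)) n).trans ?_
  rw [div_le_div_iff₀ (by positivity) (by positivity)]
  rw [div_le_iff₀ hm'] at hd
  linarith

theorem summable_norm_of_summable_norm_mul_abs {E : Type*} [SeminormedAddCommGroup E] {c : ℤ → E}
    (h : Summable fun m : ℤ => ‖c m‖ * |(m : ℝ)|) : Summable fun m => ‖c m‖ := by
  refine h.of_norm_bounded_eventually ((Filter.eventually_cofinite_ne 0).mono fun m hm => ?_)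
  rw [norm_norm]
  exact le_mul_of_one_le_right (norm_nonneg _) (by exact_mod_cast Int.one_le_abs hm)

theorem hasSum_birkhoff_sum_exp {c : ℤ → ℂ} (hc : Summable fun m => ‖c m‖) (θ α : ℝ) (n : ℕ) :
    HasSum (fun m : ℤ => c m * exp (m * θ * I) * ∑ k ∈ range n, exp (2 * π * (m * α : ℝ) * I) ^ k)
      (∑ k ∈ range n, ∑' m : ℤ, c m * exp (m * ((θ + 2 * π * k * α : ℝ) : ℂ) * I)) := by
  have hterm : ∀ (k : ℕ) (m : ℤ), c m * exp (m * θ * I) * exp (2 * π * (m * α : ℝ) * I) ^ k =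
      c m * exp (m * ((θ + 2 * π * k * α : ℝ) : ℂ) * I) := by
    intro k m
    rw [mul_assoc, ← Complex.exp_nat_mul, ← Complex.exp_add]
    push_cast
    ring_nf
  simp_rw [mul_sum, hterm]
  refine hasSum_sum fun k _ => (hc.of_norm_bounded fun m => ?_).hasSum
  rw [norm_mul]
  exact mul_le_of_le_one_right (norm_nonneg _) (by simp [norm_exp])

theorem HasSum.norm_sub_le_of_norm_le {ι E : Type*} [NormedAddCommGroup E] {h : ι → E} {a : E}
    (hh : HasSum h a) {B : ι → ℝ} (hB : Summable B) (b : ι) (hb : 0 ≤ B b)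
    (hbound : ∀ i, i ≠ b → ‖h i‖ ≤ B i) : ‖a - h b‖ ≤ ∑' i, B i := by
  classical
  rw [← (hasSum_ite_sub_hasSum hh b).tsum_eq]
  refine tsum_of_norm_bounded hB.hasSum fun i => ?_
  split_ifs with hi
  · simpa [hi] using hb
  · exact hbound i hi

theorem birkhoff_average_rate_general (α : ℝ) (δ : ℝ) (hδ : 0 < δ)
    (hα : ∀ p : ℤ, ∀ q : ℕ, 1 ≤ q → |α - (p : ℝ) / (q : ℝ)| ≥ δ / (q : ℝ) ^ 2)
    (f : ℝ → ℂ) (c : ℤ → ℂ)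
    (hsum : Summable (fun m : ℤ => ‖c m‖ * |(m : ℝ)|))
    (hf : ∀ θ : ℝ, f θ = ∑' m : ℤ, c m * Complex.exp ((m : ℂ) * θ * Complex.I)) :
    ∃ K : ℝ, ∀ θ : ℝ, ∀ n : ℕ, 1 ≤ n →
      ‖(1 / (n : ℂ)) * ∑ k ∈ Finset.range n, f (θ + 2 * π * k * α) - c 0‖ ≤ K / n := by
  have hc := summable_norm_of_summable_norm_mul_abs hsum
  refine ⟨(∑' m : ℤ, ‖c m‖ * |(m : ℝ)|) / (2 * δ), fun θ n hn => ?_⟩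
  have hbirkhoff := hasSum_birkhoff_sum_exp hc θ α n
  simp only [← hf] at hbirkhoff
  have hbound : ∀ m : ℤ, m ≠ 0 → ‖c m * exp (m * θ * I) *
      ∑ k ∈ range n, exp (2 * π * (m * α : ℝ) * I) ^ k‖ ≤ ‖c m‖ * |(m : ℝ)| / (2 * δ) := by
    intro m hm
    rw [norm_mul, norm_mul, mul_div_assoc]
    gcongr
    · simp [norm_exp]
    · exact IsConstantType.norm_geom_sum_exp_le hα hδ hm n
  have htail := hbirkhoff.norm_sub_le_of_norm_le (hsum.div_const _) 0 (by simp) hbound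
  simp only [Int.cast_zero, zero_mul, ofReal_zero, mul_zero, Complex.exp_zero, mul_one, one_pow,
    sum_const, card_range, nsmul_eq_mul, tsum_div_const] at htail
  have hn0 : (n : ℂ) ≠ 0 := by exact_mod_cast (by omega : n ≠ 0)
  calc ‖1 / (n : ℂ) * ∑ k ∈ range n, f (θ + 2 * π * k * α) - c 0‖
      = ‖∑ k ∈ range n, f (θ + 2 * π * k * α) - c 0 * n‖ / n := by
        rw [← Complex.norm_natCast, ← norm_div, sub_div, mul_div_cancel_right₀ _ hn0,
          one_div_mul_eq_div]
    _ ≤ _ := by gcongr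

/-- Uniform O(1/n) convergence of Birkhoff averages for functions with Fourier
coefficients satisfying `∑_{m≠0} |f̂_m||m| < ∞`, over a rotation of constant type. -/
theorem birkhoff_average_rate (α : ℝ) (δ : ℝ) (hδ : 0 < δ)
    (hα : ∀ p : ℤ, ∀ q : ℕ, 1 ≤ q → |α - (p : ℝ) / (q : ℝ)| ≥ δ / (q : ℝ) ^ 2)
    (f : ℝ → ℂ) (c : ℤ → ℂ)
    (hper : Function.Periodic f (2 * π))
    (hsum : Summable (fun m : ℤ => ‖c m‖ * |(m : ℝ)|))
    (hf : ∀ θ : ℝ, f θ = ∑' m : ℤ, c m * Complex.exp ((m : ℂ) * θ * Complex.I)) :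
    ∃ K : ℝ, ∀ θ : ℝ, ∀ n : ℕ, 1 ≤ n →
      ‖(1 / (n : ℂ)) * ∑ k ∈ Finset.range n, f (θ + 2 * π * k * α) - c 0‖ ≤ K / n :=
  birkhoff_average_rate_general α δ hδ hα f c hsum hf
end

section
/- Let α = p/q be rational in lowest terms and F : ℝ × 𝕋 → ℝ continuous. Suppose there exist θ*, θ_* ∈ 𝕋 such that F(r, θ_* + 2πkα) < 0 and F(r, θ* + 2πkα) > 0 for all r ∈ ℝ and all k = 0,…,q−1. Then for every ε > 0 there is no continuous 2π-periodic ψ and λ ∈ ℝ with ψ(θ + 2πα) = ψ(θ) + ε F(ψ(θ), θ) + λ for all θ. -/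
/-!
Summing the equation `ψ(θ + 2πα) = ψ(θ) + εF(ψ(θ), θ) + λ` along the orbit `θ + 2πkα`,
`0 ≤ k < q`, of the rotation makes the `ψ`-terms telescope, and the orbit closes up because
`2πqα ∈ 2πℤ` and `ψ` is `2π`-periodic. Hence `ε ∑ₖ F(ψ(θₖ), θₖ) = -qλ` for every starting
point `θ`, which is impossible when this sum is negative along one orbit and positive along
another.
-/

open Real Finset Function

theorem apply_add_nsmul_eq_add_sum {G M : Type*} [AddMonoid G] [AddCommMonoid M]
    {ψ g : G → M} {τ : G} {c : M} (h : ∀ x, ψ (x + τ) = ψ x + g x + c) (x : G) (n : ℕ) :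
    ψ (x + n • τ) = ψ x + ∑ k ∈ range n, g (x + k • τ) + n • c := by
  induction n with
  | zero => simp
  | succ n ih =>
    rw [succ_nsmul, ← add_assoc, h, ih, sum_range_succ, succ_nsmul]
    abel

theorem sum_range_add_nsmul_eq_neg_nsmul {G M : Type*} [AddMonoid G] [AddCommGroup M]
    {ψ g : G → M} {τ : G} {c : M} (h : ∀ x, ψ (x + τ) = ψ x + g x + c) {n : ℕ}
    (hn : Periodic ψ (n • τ)) (x : G) :
    ∑ k ∈ range n, g (x + k • τ) = -(n • c) := by
  have hx := apply_add_nsmul_eq_add_sum h x n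
  rw [hn x, add_assoc, left_eq_add] at hx
  exact eq_neg_of_add_eq_zero_left hx

theorem Function.Periodic.nsmul_mul_intCast_div {β : Type*} {ψ : ℝ → β} {T : ℝ}
    (h : Periodic ψ T) (p : ℤ) {q : ℕ} (hq : q ≠ 0) : Periodic ψ (q • (T * (p / q))) := by
  have hperiod : q • (T * (p / q)) = p * T := by
    rw [nsmul_eq_mul]
    field_simp
  rw [hperiod]
  exact h.int_mul p

theorem no_translated_curve_rational_general (p : ℤ) (q : ℕ) (hq : 1 ≤ q)
    (α : ℝ) (hα : α = (p : ℝ) / (q : ℝ))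
    (F : ℝ → ℝ → ℝ)
    (θstar θlow : ℝ)
    (hneg : ∀ r : ℝ, ∀ k : ℕ, k < q → F r (θlow + 2 * π * k * α) < 0)
    (hpos : ∀ r : ℝ, ∀ k : ℕ, k < q → F r (θstar + 2 * π * k * α) > 0) :
    ∀ ε : ℝ, 0 < ε →
      ¬ ∃ (ψ : ℝ → ℝ) (lam : ℝ), Continuous ψ ∧ Function.Periodic ψ (2 * π) ∧
        ∀ θ : ℝ, ψ (θ + 2 * π * α) = ψ θ + ε * F (ψ θ) θ + lam := by
  rintro ε hε ⟨ψ, lam, -, hper, heq⟩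
  have hqper : Periodic ψ (q • (2 * π * α)) := hα ▸ hper.nsmul_mul_intCast_div p (by omega)
  have horbit (θ : ℝ) :
      ∑ k ∈ range q, ε * F (ψ (θ + 2 * π * k * α)) (θ + 2 * π * k * α) = -(q • lam) := by
    have hθ := sum_range_add_nsmul_eq_neg_nsmul heq hqper θ
    simp only [nsmul_eq_mul] at hθ ⊢
    rw [← hθ]
    refine sum_congr rfl fun k _ => ?_
    ring_nf
  have hne : (range q).Nonempty := nonempty_range_iff.mpr (by omega)
  have hlow : -(q • lam) < 0 := horbit θlow ▸
    sum_neg (fun k hk => mul_neg_of_pos_of_neg hε (hneg _ k (mem_range.mp hk))) hne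
  have hstar : 0 < -(q • lam) := horbit θstar ▸
    sum_pos (fun k hk => mul_pos hε (hpos _ k (mem_range.mp hk))) hne
  exact lt_asymm hlow hstar

/-- Nonexistence of translated curves for rational rotation number when the forcing
has a fixed sign along two periodic orbits. -/
theorem no_translated_curve_rational (p : ℤ) (q : ℕ) (hq : 1 ≤ q)
    (hcop : Nat.Coprime p.natAbs q) (α : ℝ) (hα : α = (p : ℝ) / (q : ℝ))
    (F : ℝ → ℝ → ℝ) (hF : Continuous fun rθ : ℝ × ℝ => F rθ.1 rθ.2)
    (hFper : ∀ r θ, F r (θ + 2 * π) = F r θ)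
    (θstar θlow : ℝ)
    (hneg : ∀ r : ℝ, ∀ k : ℕ, k < q → F r (θlow + 2 * π * k * α) < 0)
    (hpos : ∀ r : ℝ, ∀ k : ℕ, k < q → F r (θstar + 2 * π * k * α) > 0) :
    ∀ ε : ℝ, 0 < ε →
      ¬ ∃ (ψ : ℝ → ℝ) (lam : ℝ), Continuous ψ ∧ Function.Periodic ψ (2 * π) ∧
        ∀ θ : ℝ, ψ (θ + 2 * π * α) = ψ θ + ε * F (ψ θ) θ + lam :=
  no_translated_curve_rational_general p q hq α hα F θstar θlow hneg hpos
end

section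
/- Let q ≥ 1 be an integer and F(r,θ) = (1 + sin²r) sin(qθ). Then for α = p/q in lowest terms and any ε > 0, the map (r,θ) ↦ (r + εF(r,θ), θ + 2πα) has no translated curve: there is no continuous 2π-periodic ψ and λ ∈ ℝ with ψ(θ+2πα) = ψ(θ) + εF(ψ(θ),θ) + λ. -/
open Real Finset

/-!
Summing the functional equation along an orbit of the rotation, which closes up after `q` steps,
the increments of `ψ` telescope away. Since `sin (q θ)` is constant along the orbit, this gives
`ε sin (q θ) S(θ) + q λ = 0` with `S(θ) ≥ q > 0`. At `θ = π/(2q)` this forces `λ < 0`, at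
`θ = -π/(2q)` it forces `λ > 0`.
-/

theorem Function.Periodic.sum_increment_orbit_eq_zero {ψ g : ℝ → ℝ} {a c : ℝ}
    (hψ : Function.Periodic ψ c) (hstep : ∀ θ, ψ (θ + a) = ψ θ + g θ) {n : ℕ} {m : ℤ}
    (hclose : n * a = m * c) (θ : ℝ) :
    ∑ k ∈ range n, g (θ + k * a) = 0 := by
  have htele := sum_range_sub (fun k : ℕ => ψ (θ + k * a)) n
  have hterm : ∀ k : ℕ, ψ (θ + (k + 1 : ℕ) * a) - ψ (θ + k * a) = g (θ + k * a) := by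
    intro k
    rw [Nat.cast_succ, add_one_mul, ← add_assoc, hstep]
    ring
  simp only [hterm, Nat.cast_zero, zero_mul, add_zero, hclose] at htele
  rw [htele, hψ.int_mul m θ, sub_self]

theorem sin_natCast_mul_add_rotation {q : ℕ} (hq : q ≠ 0) (p : ℤ) (k : ℕ) (θ : ℝ) :
    sin (q * (θ + k * (2 * π * (p / q)))) = sin (q * θ) := by
  have hq' : (q : ℝ) ≠ 0 := Nat.cast_ne_zero.mpr hq
  have harg : (q : ℝ) * (θ + k * (2 * π * (p / q))) = q * θ + ((p * k : ℤ) : ℝ) * (2 * π) := by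
    push_cast
    field_simp
  rw [harg, sin_add_int_mul_two_pi]

theorem no_translated_curve_example_general (q : ℕ) (hq : 1 ≤ q) (p : ℤ)
    (α : ℝ) (hα : α = (p : ℝ) / (q : ℝ))
    (F : ℝ → ℝ → ℝ)
    (hF : ∀ r θ, F r θ = (1 + Real.sin r ^ 2) * Real.sin (q * θ)) :
    ∀ ε : ℝ, 0 < ε →
      ¬ ∃ (ψ : ℝ → ℝ) (lam : ℝ), Continuous ψ ∧ Function.Periodic ψ (2 * π) ∧
        ∀ θ : ℝ, ψ (θ + 2 * π * α) = ψ θ + ε * F (ψ θ) θ + lam := by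
  rintro ε hε ⟨ψ, lam, -, hper, hstep⟩
  subst hα
  have hq0 : q ≠ 0 := Nat.one_le_iff_ne_zero.mp hq
  set S : ℝ → ℝ := fun θ => ∑ k ∈ range q, (1 + sin (ψ (θ + k * (2 * π * (p / q)))) ^ 2)
  have hS : ∀ θ, 0 < S θ := fun θ =>
    sum_pos (fun k _ => by positivity) (nonempty_range_iff.mpr hq0)
  have horbit : ∀ θ, ε * sin (q * θ) * S θ + q * lam = 0 := by
    intro θ
    have hclose : (q : ℝ) * (2 * π * (p / q)) = p * (2 * π) := by field_simp
    rw [← hper.sum_increment_orbit_eq_zero (fun θ => by rw [hstep, add_assoc]) hclose θ,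
      sum_add_distrib, sum_const, card_range, nsmul_eq_mul, mul_sum]
    simp only [hF, sin_natCast_mul_add_rotation hq0]
    congr 1
    exact sum_congr rfl fun k _ => by ring
  have hsin_pos : sin (q * (π / (2 * q))) = 1 := by
    rw [show (q : ℝ) * (π / (2 * q)) = π / 2 by field_simp, sin_pi_div_two]
  have hsin_neg : sin (q * -(π / (2 * q))) = -1 := by
    rw [mul_neg, sin_neg, hsin_pos]
  have h₁ := horbit (π / (2 * q))
  have h₂ := horbit (-(π / (2 * q)))
  rw [hsin_pos] at h₁
  rw [hsin_neg] at h₂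
  linarith [mul_pos hε (hS (π / (2 * q))), mul_pos hε (hS (-(π / (2 * q))))]

/-- For `F(r,θ) = (1 + sin²r) sin(qθ)` and rational rotation number `p/q`, the
quasiperiodically forced map has no translated curve. -/
theorem no_translated_curve_example (q : ℕ) (hq : 1 ≤ q) (p : ℤ)
    (hcop : Nat.Coprime p.natAbs q) (α : ℝ) (hα : α = (p : ℝ) / (q : ℝ))
    (F : ℝ → ℝ → ℝ)
    (hF : ∀ r θ, F r θ = (1 + Real.sin r ^ 2) * Real.sin (q * θ)) :
    ∀ ε : ℝ, 0 < ε →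
      ¬ ∃ (ψ : ℝ → ℝ) (lam : ℝ), Continuous ψ ∧ Function.Periodic ψ (2 * π) ∧
        ∀ θ : ℝ, ψ (θ + 2 * π * α) = ψ θ + ε * F (ψ θ) θ + lam :=
  no_translated_curve_example_general q hq p α hα F hF
end

section
/- Let α be irrational, a : 𝕋 → ℝ continuous and positive, and suppose there exists a continuous positive b : 𝕋 → ℝ with a(θ) = b(θ)/b(θ + 2πα) for all θ, and a continuous p : 𝕋 → ℝ with ∫_0^{2π} p(θ) b(θ + 2πα) dθ ≠ 0. Then there is no continuous 2π-periodic φ satisfying φ(θ + 2πα) = a(θ)φ(θ) + p(θ) for all θ. -/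
/-!
Writing `a = b / b(· + 2πα)` turns the equation for `φ` into the additive cohomological
equation `ψ(θ + 2πα) = ψ(θ) + p(θ) b(θ + 2πα)` for the continuous periodic function `ψ = b φ`.
Integrating over a period, rotation invariance of Lebesgue measure on the circle makes the
two integrals of `ψ` cancel, which forces `∫ p(θ) b(θ + 2πα) dθ = 0`.
-/

open Real intervalIntegral

theorem Function.Periodic.intervalIntegral_comp_add_right {E : Type*} [NormedAddCommGroup E]
    [NormedSpace ℝ E] {ψ : ℝ → E} {T : ℝ} (hψ : Function.Periodic ψ T) (c : ℝ) :
    ∫ θ in (0 : ℝ)..T, ψ (θ + c) = ∫ θ in (0 : ℝ)..T, ψ θ := by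
  rw [intervalIntegral.integral_comp_add_right ψ c, zero_add, add_comm T c,
    hψ.intervalIntegral_add_eq c 0, zero_add]

theorem intervalIntegral_eq_zero_of_eq_comp_add_sub {E : Type*} [NormedAddCommGroup E]
    [NormedSpace ℝ E] {ψ q : ℝ → E} {T c : ℝ} (hψ : Continuous ψ)
    (hψper : Function.Periodic ψ T) (hq : ∀ θ, ψ (θ + c) = ψ θ + q θ) :
    ∫ θ in (0 : ℝ)..T, q θ = 0 := by
  have hq_sub : ∀ θ, q θ = ψ (θ + c) - ψ θ := fun θ => by rw [hq θ, add_sub_cancel_left]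
  have hψc : Continuous fun θ => ψ (θ + c) := hψ.comp (continuous_add_const c)
  simp only [hq_sub]
  rw [intervalIntegral.integral_sub (hψc.intervalIntegrable 0 T) (hψ.intervalIntegrable 0 T),
    hψper.intervalIntegral_comp_add_right c, sub_self]

theorem mul_comp_add_eq_of_eq_div_comp_add {K : Type*} [Field K] {a b p φ : K → K} {c θ : K}
    (hb : b (θ + c) ≠ 0) (hcob : a θ = b θ / b (θ + c))
    (hφ : φ (θ + c) = a θ * φ θ + p θ) :
    b (θ + c) * φ (θ + c) = b θ * φ θ + p θ * b (θ + c) := by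
  rw [hφ, hcob]
  field_simp

theorem no_solution_linear_difference_general (α : ℝ)
    (a b p : ℝ → ℝ)
    (hb : Continuous b) (hbper : Function.Periodic b (2 * π)) (hbpos : ∀ θ, 0 < b θ)
    (hcob : ∀ θ : ℝ, a θ = b θ / b (θ + 2 * π * α))
    (hint : (∫ θ in (0 : ℝ)..(2 * π), p θ * b (θ + 2 * π * α)) ≠ 0) :
    ¬ ∃ φ : ℝ → ℝ, Continuous φ ∧ Function.Periodic φ (2 * π) ∧
      ∀ θ : ℝ, φ (θ + 2 * π * α) = a θ * φ θ + p θ := by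
  rintro ⟨φ, hφ, hφper, hφeq⟩
  exact hint <| intervalIntegral_eq_zero_of_eq_comp_add_sub (hb.mul hφ) (hbper.mul hφper)
    fun θ => mul_comp_add_eq_of_eq_div_comp_add (hbpos _).ne' (hcob θ) (hφeq θ)

/-- Obstruction to solving the linear difference equation `φ(θ+2πα) = a(θ)φ(θ) + p(θ)`
when `a` is a multiplicative coboundary and `p` has nonzero weighted average. -/
theorem no_solution_linear_difference (α : ℝ) (hα : Irrational α)
    (a b p : ℝ → ℝ)
    (ha : Continuous a) (haper : Function.Periodic a (2 * π)) (hapos : ∀ θ, 0 < a θ)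
    (hb : Continuous b) (hbper : Function.Periodic b (2 * π)) (hbpos : ∀ θ, 0 < b θ)
    (hcob : ∀ θ : ℝ, a θ = b θ / b (θ + 2 * π * α))
    (hp : Continuous p) (hpper : Function.Periodic p (2 * π))
    (hint : (∫ θ in (0 : ℝ)..(2 * π), p θ * b (θ + 2 * π * α)) ≠ 0) :
    ¬ ∃ φ : ℝ → ℝ, Continuous φ ∧ Function.Periodic φ (2 * π) ∧
      ∀ θ : ℝ, φ (θ + 2 * π * α) = a θ * φ θ + p θ :=
  no_solution_linear_difference_general α a b p hb hbper hbpos hcob hint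
end
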